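/- arXiv:1504.04464 — 3 statements merged into one kernel-verified Lean document; each statement's English description precedes it below -/
import Mathlib

section
/- Let 0<p0,p1<1, k≥2, M≥1, and set p̂ = p0 + p1 − p0·p1 and p̃ = (1 − p1^(k−1))·p̂. Suppose Y1 ~ Binomial(M, 1−p̂), and conditionally on Y1 = i, Z − Y1 counts additional successes with P(Z = j | Y1 = i) = C(M−i, j−i)·(1−p1^(k−1))^(j−i)·p1^((k−1)(M−j)) for i ≤ j ≤ M. Then Δ = Z − Y1 follows the Binomial(M, p̃) distribution, i.e., P(Δ = δ) = C(M, δ)·p̃^δ·(1−p̃)^(M−δ) for all 0 ≤ δ ≤ M. -/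
/-!
Conditionally on `Y1 = i`, the deficit needs `δ` of the `M - i` lost packets to be recovered,
so `P(Δ = δ)` is a sum over `i` of a product of two binomial weights. The exchange
`C(M, i) C(M - i, δ) = C(M, δ) C(M - δ, i)` pulls out `C(M, δ) (s p̂)^δ`, and what remains is the
binomial expansion of `(q + p̂ r)^(M - δ)`, where `q = (1 - p0)(1 - p1)`, `r = p1^(k-1)` and
`s = 1 - r`; since `q + p̂ = 1`, this is `(1 - s p̂)^(M - δ)`.
-/

open Finset

theorem Nat.choose_mul_choose_sub_comm (n i j : ℕ) :
    n.choose i * (n - i).choose j = n.choose j * (n - j).choose i := by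
  have hi := Nat.choose_mul (n := n) (k := i + j) (Nat.le_add_right i j)
  have hj := Nat.choose_mul (n := n) (k := i + j) (Nat.le_add_left j i)
  rw [Nat.add_sub_cancel_left] at hi
  rw [Nat.add_sub_cancel] at hj
  rw [← hi, ← hj, Nat.choose_symm_add]

section BinomialMixture

variable {R : Type*} [CommSemiring R]

theorem choose_mul_pow_mul_choose_mul_pow {M i δ : ℕ} (h : i + δ ≤ M) (q a s r : R) :
    (M.choose i * q ^ i * a ^ (M - i)) * ((M - i).choose δ * s ^ δ * r ^ (M - i - δ))
      = M.choose δ * (s * a) ^ δ * (q ^ i * (a * r) ^ (M - δ - i) * (M - δ).choose i) := by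
  have ha : a ^ (M - i) = a ^ δ * a ^ (M - δ - i) := by rw [← pow_add]; congr 1; omega
  have hr : M - i - δ = M - δ - i := by omega
  have hchoose : (M.choose i : R) * (M - i).choose δ = M.choose δ * (M - δ).choose i := by
    rw [← Nat.cast_mul, ← Nat.cast_mul, Nat.choose_mul_choose_sub_comm]
  rw [ha, hr, mul_pow, mul_pow]
  calc _ = ((M.choose i : R) * (M - i).choose δ)
          * (q ^ i * a ^ δ * a ^ (M - δ - i) * s ^ δ * r ^ (M - δ - i)) := by ring
    _ = _ := by rw [hchoose]; ring

theorem sum_choose_mul_pow_mul_choose_mul_pow (M δ : ℕ) (q a s r : R) :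
    ∑ i ∈ range (M - δ + 1),
      (M.choose i * q ^ i * a ^ (M - i)) * ((M - i).choose δ * s ^ δ * r ^ (M - i - δ))
      = M.choose δ * (s * a) ^ δ * (q + a * r) ^ (M - δ) := by
  by_cases hδ : δ ≤ M
  · rw [add_pow, mul_sum]
    refine sum_congr rfl fun i hi => choose_mul_pow_mul_choose_mul_pow ?_ q a s r
    have := mem_range.mp hi
    omega
  · have hzero : M - δ = 0 := by omega
    simp [hzero, Nat.choose_eq_zero_of_lt (not_le.mp hδ)]

end BinomialMixture

/-- The left-hand side is `P(Δ = δ) = ∑_i P(Y1 = i) · P(Z = i + δ | Y1 = i)`. -/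
theorem lemma1_delta_binomial_general (p0 p1 : ℝ) (k M δ : ℕ) :
    ∑ i ∈ Finset.range (M - δ + 1),
      ((M.choose i : ℝ) * ((1 - p0) * (1 - p1)) ^ i * (p0 + p1 - p0 * p1) ^ (M - i)) *
        (((M - i).choose δ : ℝ) * (1 - p1 ^ (k - 1)) ^ δ * p1 ^ ((k - 1) * (M - i - δ)))
    = (M.choose δ : ℝ) * ((1 - p1 ^ (k - 1)) * (p0 + p1 - p0 * p1)) ^ δ *
        (1 - (1 - p1 ^ (k - 1)) * (p0 + p1 - p0 * p1)) ^ (M - δ) := by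
  have hloss : 1 - (1 - p1 ^ (k - 1)) * (p0 + p1 - p0 * p1)
      = (1 - p0) * (1 - p1) + (p0 + p1 - p0 * p1) * p1 ^ (k - 1) := by ring
  simp_rw [pow_mul]
  rw [hloss, sum_choose_mul_pow_mul_choose_mul_pow]

/-- Lemma 1 of the paper: the deficit Δ = Z − Y1 is Binomial(M, ptilde) with
ptilde = (1 − p1^(k−1))·(p0 + p1 − p0·p1).  The left-hand side is the unconditional
probability P(Δ = δ) = ∑_i P(Y1 = i)·P(Z = i + δ | Y1 = i). -/
theorem lemma1_delta_binomial (p0 p1 : ℝ) (k M δ : ℕ)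
    (hp0 : 0 < p0) (hp0' : p0 < 1) (hp1 : 0 < p1) (hp1' : p1 < 1)
    (hk : 2 ≤ k) (hM : 1 ≤ M) (hδ : δ ≤ M) :
    ∑ i ∈ Finset.range (M - δ + 1),
      ((M.choose i : ℝ) * ((1 - p0) * (1 - p1)) ^ i * (p0 + p1 - p0 * p1) ^ (M - i)) *
        (((M - i).choose δ : ℝ) * (1 - p1 ^ (k - 1)) ^ δ * p1 ^ ((k - 1) * (M - i - δ)))
    = (M.choose δ : ℝ) * ((1 - p1 ^ (k - 1)) * (p0 + p1 - p0 * p1)) ^ δ *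
        (1 - (1 - p1 ^ (k - 1)) * (p0 + p1 - p0 * p1)) ^ (M - δ) :=
  lemma1_delta_binomial_general p0 p1 k M δ
end

section
/- Let 0 ≤ p1 < 1, 0 ≤ p2 < 1, M ≥ 1, and fix an integer N with 0 ≤ N ≤ M (the number of received packets in a batch). Define P(m) = C(N, m)·p1^m·(1−p1)^(N−m) for 0 ≤ m ≤ N and P(m) = 0 for N < m ≤ M, and for u ≥ 0 define f(u) = ∑_{m=u+1}^{M} P(m) + ∑_{m=1}^{u} P(m)·∑_{l=0}^{m−1} C(u, l)·(1−p2)^l·p2^(u−l). Then f(u) is non-increasing in u: f(u+1) ≤ f(u) for all u ≥ 0, with strict inequality when 0 < p1 < 1, 0 < p2 < 1 and N ≥ 1. -/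
/-!
Write `q = 1 - p2` and let `B u m = ∑_{l<m} C(u,l) q^l p2^(u-l)` be the probability that a
Binomial(u, q) variable is below `m`. Since `B u m = 1` for `m > u` and `P m = 0` for `m > N`,
`f u = ∑_{m=1}^{M} P(m) B(u,m)`. Pascal's rule gives
`B u m = B (u+1) m + C(u, m-1) q^m p2^(u+1-m)` for `m ≥ 1`, so `f u - f (u+1)` is a sum of
nonnegative terms, whose `m = 1` term `P(1) q p2^u` is positive in the strict case.
-/

/-- P(m): probability that exactly m of the N received packets of a batch are
erased at a peer (phase-1 erasure probability p1); zero for m > N since C(N,m) = 0. -/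
noncomputable def batchP (N : ℕ) (p1 : ℝ) (m : ℕ) : ℝ :=
  (N.choose m : ℝ) * p1 ^ m * (1 - p1) ^ (N - m)

/-- The usefulness metric f(u) of equation (7): the probability that the (u+1)-th
coded packet sent from a batch (for which the sender received N packets) is still
useful for a peer, with peer-to-peer erasure probability p2. -/
noncomputable def usefulness (M N : ℕ) (p1 p2 : ℝ) (u : ℕ) : ℝ :=
  (∑ m ∈ Finset.Icc (u + 1) M, batchP N p1 m) +
    ∑ m ∈ Finset.Icc 1 u, batchP N p1 m *
      ∑ l ∈ Finset.range m, (u.choose l : ℝ) * (1 - p2) ^ l * p2 ^ (u - l)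

open Finset

section BinomCDF

variable {R : Type*} [CommSemiring R]

/-- For `q + p = 1`, the probability that a Binomial(n, q) variable is strictly less than `m`. -/
def binomCDF (q p : R) (n m : ℕ) : R :=
  ∑ l ∈ range m, (n.choose l : R) * q ^ l * p ^ (n - l)

theorem binomCDF_of_lt {q p : R} (hqp : q + p = 1) {n m : ℕ} (hnm : n < m) :
    binomCDF q p n m = 1 := by
  have hvanish : ∀ l ∈ range m, l ∉ range (n + 1) →
      (n.choose l : R) * q ^ l * p ^ (n - l) = 0 := by
    intro l _ hl
    rw [Nat.choose_eq_zero_of_lt (by simpa using hl), Nat.cast_zero, zero_mul, zero_mul]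
  rw [binomCDF, ← sum_subset (range_subset_range.2 hnm) hvanish, ← one_pow n, ← hqp, add_pow]
  exact sum_congr rfl fun l _ => by ring

theorem binomCDF_succ (q p : R) (n m : ℕ) :
    binomCDF q p n (m + 1) = binomCDF q p n m + n.choose m * q ^ m * p ^ (n - m) :=
  sum_range_succ _ _

theorem choose_mul_pow_eq_add {q p : R} (hqp : q + p = 1) (n m : ℕ) :
    (n.choose (m + 1) : R) * q ^ (m + 1) * p ^ (n - (m + 1)) =
      n.choose (m + 1) * q ^ (m + 1) * p ^ (n - m) +
        n.choose (m + 1) * q ^ (m + 2) * p ^ (n - (m + 1)) := by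
  rcases lt_or_ge n (m + 1) with hlt | hle
  · simp [Nat.choose_eq_zero_of_lt hlt]
  · obtain ⟨k, rfl⟩ := Nat.exists_eq_add_of_le hle
    rw [show m + 1 + k - m = k + 1 by omega, Nat.add_sub_cancel_left]
    calc _ = ((m + 1 + k).choose (m + 1) : R) * q ^ (m + 1) * p ^ k * (q + p) := by
          rw [hqp, mul_one]
      _ = _ := by ring

theorem binomCDF_succ_right {q p : R} (hqp : q + p = 1) (n m : ℕ) :
    binomCDF q p n (m + 1) =
      binomCDF q p (n + 1) (m + 1) + n.choose m * q ^ (m + 1) * p ^ (n - m) := by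
  induction m with
  | zero =>
    simp only [binomCDF, sum_range_one, Nat.choose_zero_right, Nat.cast_one, pow_zero,
      Nat.sub_zero, zero_add, pow_one, one_mul, mul_one]
    calc p ^ n = p ^ n * (q + p) := by rw [hqp, mul_one]
      _ = _ := by ring
  | succ m ih =>
    rw [binomCDF_succ q p n (m + 1), ih, binomCDF_succ q p (n + 1) (m + 1),
      Nat.choose_succ_succ', Nat.cast_add, Nat.add_sub_add_right, choose_mul_pow_eq_add hqp]
    ring

end BinomCDF

lemma batchP_nonneg (N : ℕ) {p1 : ℝ} (h0 : 0 ≤ p1) (h1 : p1 ≤ 1) (m : ℕ) :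
    0 ≤ batchP N p1 m := by
  have : 0 ≤ 1 - p1 := sub_nonneg.2 h1
  unfold batchP
  positivity

lemma batchP_one_pos {N : ℕ} (hN : 1 ≤ N) {p1 : ℝ} (h0 : 0 < p1) (h1 : p1 < 1) :
    0 < batchP N p1 1 := by
  have : 0 < 1 - p1 := sub_pos.2 h1
  have : (0 : ℝ) < N := by exact_mod_cast hN
  rw [batchP, Nat.choose_one_right]
  positivity

lemma batchP_eq_zero_of_lt (N : ℕ) (p1 : ℝ) {m : ℕ} (h : N < m) : batchP N p1 m = 0 := by
  simp [batchP, Nat.choose_eq_zero_of_lt h]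

theorem usefulness_eq_sum_batchP_mul_binomCDF {M N : ℕ} (hN : N ≤ M) (p1 p2 : ℝ) (u : ℕ) :
    usefulness M N p1 p2 u = ∑ m ∈ Icc 1 M, batchP N p1 m * binomCDF (1 - p2) p2 u m := by
  set g := fun m => batchP N p1 m * binomCDF (1 - p2) p2 u m
  have hhigh : ∑ m ∈ Icc (u + 1) M, batchP N p1 m = ∑ m ∈ Icc (u + 1) M, g m :=
    sum_congr rfl fun m hm => by
      show _ = _ * _
      rw [binomCDF_of_lt (sub_add_cancel 1 p2) (by have := mem_Icc.1 hm; omega), mul_one]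
  have hdisj : Disjoint (Icc (u + 1) M) (Icc 1 u) := by
    rw [disjoint_left]; intro m; simp only [mem_Icc]; omega
  have hsub : Icc 1 M ⊆ Icc (u + 1) M ∪ Icc 1 u := by
    intro m; simp only [mem_union, mem_Icc]; omega
  have hvanish : ∀ m ∈ Icc (u + 1) M ∪ Icc 1 u, m ∉ Icc 1 M → g m = 0 := by
    intro m _ hm
    simp only [mem_Icc, not_and, not_le] at hm
    rcases Nat.eq_zero_or_pos m with rfl | hpos
    · simp [g, binomCDF]
    · simp [g, batchP_eq_zero_of_lt N p1 (by omega : N < m)]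
  rw [usefulness, hhigh, sum_subset hsub hvanish, sum_union hdisj]
  rfl

theorem usefulness_eq_succ_add {M N : ℕ} (hN : N ≤ M) (p1 p2 : ℝ) (u : ℕ) :
    usefulness M N p1 p2 u = usefulness M N p1 p2 (u + 1) +
      ∑ m ∈ Icc 1 M, batchP N p1 m * (u.choose (m - 1) * (1 - p2) ^ m * p2 ^ (u + 1 - m)) := by
  rw [usefulness_eq_sum_batchP_mul_binomCDF hN, usefulness_eq_sum_batchP_mul_binomCDF hN,
    ← sum_add_distrib]
  refine sum_congr rfl fun m hm => ?_
  obtain ⟨k, rfl⟩ : ∃ k, m = k + 1 := ⟨m - 1, by have := mem_Icc.1 hm; omega⟩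
  rw [binomCDF_succ_right (sub_add_cancel 1 p2), Nat.add_sub_cancel, Nat.add_sub_add_right]
  ring

theorem usefulness_antitone_general (M N : ℕ) (p1 p2 : ℝ)
    (hN : N ≤ M) (hp1 : 0 ≤ p1) (hp1' : p1 < 1)
    (hp2 : 0 ≤ p2) (hp2' : p2 < 1) :
    (∀ u : ℕ, usefulness M N p1 p2 (u + 1) ≤ usefulness M N p1 p2 u) ∧
      (0 < p1 → 0 < p2 → 1 ≤ N →
        ∀ u : ℕ, usefulness M N p1 p2 (u + 1) < usefulness M N p1 p2 u) := by
  have hq : 0 < 1 - p2 := sub_pos.2 hp2'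
  have hterm : ∀ u m,
      0 ≤ batchP N p1 m * (u.choose (m - 1) * (1 - p2) ^ m * p2 ^ (u + 1 - m)) :=
    fun u m => mul_nonneg (batchP_nonneg N hp1 hp1'.le m) (by positivity)
  refine ⟨fun u => ?_, fun hp1pos hp2pos hN1 u => ?_⟩
  · rw [usefulness_eq_succ_add hN p1 p2 u, le_add_iff_nonneg_right]
    exact sum_nonneg fun m _ => hterm u m
  · rw [usefulness_eq_succ_add hN p1 p2 u, lt_add_iff_pos_right]
    refine sum_pos' (fun m _ => hterm u m) ⟨1, mem_Icc.2 ⟨le_rfl, by omega⟩, ?_⟩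
    have := batchP_one_pos hN1 hp1pos hp1'
    simp only [Nat.sub_self, Nat.choose_zero_right, Nat.cast_one, one_mul, pow_one,
      Nat.add_sub_cancel]
    positivity

/-- The usefulness metric is non-increasing in the transmission count u, and strictly
decreasing when 0 < p1 < 1, 0 < p2 < 1 and N ≥ 1. -/
theorem usefulness_antitone (M N : ℕ) (p1 p2 : ℝ)
    (hM : 1 ≤ M) (hN : N ≤ M) (hp1 : 0 ≤ p1) (hp1' : p1 < 1)
    (hp2 : 0 ≤ p2) (hp2' : p2 < 1) :
    (∀ u : ℕ, usefulness M N p1 p2 (u + 1) ≤ usefulness M N p1 p2 u) ∧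
      (0 < p1 → 0 < p2 → 1 ≤ N →
        ∀ u : ℕ, usefulness M N p1 p2 (u + 1) < usefulness M N p1 p2 u) :=
  usefulness_antitone_general M N p1 p2 hN hp1 hp1' hp2 hp2'
end

section
/- With the setup of the usefulness metric f(u; N) = ∑_{m=u+1}^{M} C(N,m)p1^m(1−p1)^{N−m} + ∑_{m=1}^{u} C(N,m)p1^m(1−p1)^{N−m} ∑_{l=0}^{m−1} C(u,l)(1−p2)^l p2^{u−l} (extended by zero for m > N), for fixed u ≥ 0 and 0 < p1 < 1, 0 < p2 < 1, the value f(u; N) is strictly increasing in N for 0 ≤ N ≤ M: if N < N' ≤ M then f(u; N) < f(u; N'). -/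
open Finset

noncomputable def usefulnessWeight (u : ℕ) (p2 : ℝ) (m : ℕ) : ℝ :=
  ∑ l ∈ range m, (u.choose l : ℝ) * (1 - p2) ^ l * p2 ^ (u - l)

section Weight

variable {u : ℕ} {p2 : ℝ}

@[simp]
lemma usefulnessWeight_zero : usefulnessWeight u p2 0 = 0 := by
  simp [usefulnessWeight]

lemma usefulnessWeight_one : usefulnessWeight u p2 1 = p2 ^ u := by
  simp [usefulnessWeight]

lemma usefulnessWeight_of_lt {m : ℕ} (hm : u < m) : usefulnessWeight u p2 m = 1 := by
  have hsub : range (u + 1) ⊆ range m := range_subset_range.mpr hm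
  rw [usefulnessWeight, ← sum_subset hsub fun l _ hl => by
    rw [Nat.choose_eq_zero_of_lt (by simpa using hl), Nat.cast_zero, zero_mul, zero_mul]]
  calc ∑ l ∈ range (u + 1), (u.choose l : ℝ) * (1 - p2) ^ l * p2 ^ (u - l)
      = ((1 - p2) + p2) ^ u := by rw [add_pow]; exact sum_congr rfl fun _ _ => by ring
    _ = 1 := by rw [sub_add_cancel, one_pow]

lemma monotone_usefulnessWeight (hp2 : 0 ≤ p2) (hp2' : p2 ≤ 1) :
    Monotone (usefulnessWeight u p2) :=
  monotone_nat_of_le_succ fun m => by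
    rw [usefulnessWeight, usefulnessWeight, sum_range_succ, le_add_iff_nonneg_right]
    have : 0 ≤ 1 - p2 := sub_nonneg.mpr hp2'
    positivity

end Weight

section Binomial

variable {N : ℕ} {p : ℝ}

lemma batchP_nonneg_s9 (hp : 0 ≤ p) (hp' : p ≤ 1) (m : ℕ) : 0 ≤ batchP N p m := by
  have : 0 ≤ 1 - p := sub_nonneg.mpr hp'
  unfold batchP
  positivity

lemma batchP_zero (N : ℕ) (p : ℝ) : batchP N p 0 = (1 - p) ^ N := by
  simp [batchP]

lemma batchP_self (N : ℕ) (p : ℝ) : batchP N p N = p ^ N := by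
  simp [batchP]

lemma batchP_of_lt {m : ℕ} (h : N < m) : batchP N p m = 0 := by
  simp [batchP, Nat.choose_eq_zero_of_lt h]

lemma batchP_succ_zero (N : ℕ) (p : ℝ) : batchP (N + 1) p 0 = (1 - p) * batchP N p 0 := by
  rw [batchP_zero, batchP_zero, pow_succ']

lemma batchP_succ_succ (N m : ℕ) (p : ℝ) :
    batchP (N + 1) p (m + 1) = (1 - p) * batchP N p (m + 1) + p * batchP N p m := by
  rcases lt_or_ge N m with h | h
  · rw [batchP_of_lt h, batchP_of_lt (by omega), batchP_of_lt (by omega)]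
    ring
  rcases h.eq_or_lt with rfl | h
  · rw [batchP_self, batchP_self, batchP_of_lt (Nat.lt_succ_self _)]
    ring
  · simp only [batchP, Nat.choose_succ_succ, Nat.cast_add, Nat.succ_sub_succ]
    rw [show N - m = N - (m + 1) + 1 by omega]
    ring

lemma sum_batchP_succ_mul (w : ℕ → ℝ) {M : ℕ} (hN : N < M) :
    ∑ m ∈ range (M + 1), batchP (N + 1) p m * w m =
      (1 - p) * ∑ m ∈ range (M + 1), batchP N p m * w m +
        p * ∑ m ∈ range (M + 1), batchP N p m * w (m + 1) := by
  rw [sum_range_succ' (fun m => batchP (N + 1) p m * w m),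
    sum_range_succ' (fun m => batchP N p m * w m),
    sum_range_succ (fun m => batchP N p m * w (m + 1)), batchP_of_lt hN, batchP_succ_zero]
  simp only [batchP_succ_succ, add_mul, sum_add_distrib, mul_add, mul_sum, mul_assoc, zero_mul,
    add_zero]
  ring

lemma sum_batchP_mul_lt_succ {w : ℕ → ℝ} (hw : Monotone w) (hw01 : w 0 < w 1)
    (hp : 0 < p) (hp' : p < 1) {M : ℕ} (hN : N < M) :
    ∑ m ∈ range (M + 1), batchP N p m * w m <
      ∑ m ∈ range (M + 1), batchP (N + 1) p m * w m := by
  have hshift : ∑ m ∈ range (M + 1), batchP N p m * w m <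
      ∑ m ∈ range (M + 1), batchP N p m * w (m + 1) := by
    refine sum_lt_sum (fun m _ => ?_) ⟨0, by simp, ?_⟩
    · exact mul_le_mul_of_nonneg_left (hw m.le_succ) (batchP_nonneg_s9 hp.le hp'.le m)
    · rw [batchP_zero]
      exact mul_lt_mul_of_pos_left hw01 (pow_pos (sub_pos.mpr hp') N)
  rw [sum_batchP_succ_mul w hN]
  linarith [mul_lt_mul_of_pos_left hshift hp]

lemma strictMonoOn_sum_batchP_mul {w : ℕ → ℝ} (hw : Monotone w) (hw01 : w 0 < w 1)
    (hp : 0 < p) (hp' : p < 1) (M : ℕ) :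
    StrictMonoOn (fun N => ∑ m ∈ range (M + 1), batchP N p m * w m) (Set.Iic M) :=
  strictMonoOn_Iic_of_lt_succ fun _ hN => sum_batchP_mul_lt_succ hw hw01 hp hp' hN

end Binomial

lemma usefulness_eq_sum_batchP_mul {M N : ℕ} (hNM : N ≤ M) (p1 p2 : ℝ) (u : ℕ) :
    usefulness M N p1 p2 u =
      ∑ m ∈ range (M + 1), batchP N p1 m * usefulnessWeight u p2 m := by
  set g := fun m => batchP N p1 m * usefulnessWeight u p2 m
  have hg0 : g 0 = 0 := by simp [g]
  have hg : ∀ m, N < m → g m = 0 := fun m hm => by simp [g, batchP_of_lt hm]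
  have hlow : ∑ m ∈ Icc 1 u, g m = ∑ m ∈ (range (M + 1)).filter (· ≤ u), g m := by
    rw [sum_subset (s₂ := range (u + 1)) (fun m => by simp)
        fun m hm hm' => by rw [show m = 0 by simp at hm hm'; omega, hg0],
      sum_subset (s₁ := (range (M + 1)).filter (· ≤ u)) (s₂ := range (u + 1))
        (fun m => by simp) fun m hm hm' => hg m (by simp at hm hm'; omega)]
  have hhigh : (range (M + 1)).filter (¬ · ≤ u) = Icc (u + 1) M := by
    ext m; simp; omega
  rw [← sum_filter_add_sum_filter_not _ (· ≤ u), hhigh, ← hlow, usefulness, add_comm]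
  congr 1
  exact sum_congr rfl fun m hm => by
    simp [usefulnessWeight_of_lt (show u < m by simp at hm; omega)]

/-- The usefulness metric is strictly increasing in the number N of packets received
for the batch in phase 1: if N < N' ≤ M then f(u; N) < f(u; N'). -/
theorem usefulness_strictMono_in_received (M N N' u : ℕ) (p1 p2 : ℝ)
    (hp1 : 0 < p1) (hp1' : p1 < 1) (hp2 : 0 < p2) (hp2' : p2 < 1)
    (hNN' : N < N') (hN'M : N' ≤ M) :
    usefulness M N p1 p2 u < usefulness M N' p1 p2 u := by
  rw [usefulness_eq_sum_batchP_mul (hNN'.le.trans hN'M), usefulness_eq_sum_batchP_mul hN'M]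
  have hw01 : usefulnessWeight u p2 0 < usefulnessWeight u p2 1 := by
    rw [usefulnessWeight_zero, usefulnessWeight_one]
    positivity
  exact strictMonoOn_sum_batchP_mul (monotone_usefulnessWeight hp2.le hp2'.le) hw01 hp1 hp1' M
    (Set.mem_Iic.mpr (hNN'.le.trans hN'M)) (Set.mem_Iic.mpr hN'M) hNN'
end
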